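/- Every 2-coloring of {1, ..., 11} admits a monochromatic solution to x_1 + x_2 + x_3 + x_4 + x_5 + 2 = 2·x_0. That is, R(5,2,2) ≤ 11. -/

import Mathlib

/-!
Suppose a colouring of `{1, …, 11}` with two colours has no monochromatic solution. The
solutions `(1,1,1,1,6; 6)` and `(2,2,2,2,2; 6)` force `1` and `2` to share the colour not
taken by `6`; then `(1,1,1,1,2; 4)` and `(1,2,2,2,9; 9)` give `4` and `9` the other colour,
`(4,4,4,4,4; 11)` and `(3,3,3,3,4; 9)` push `11` and `3` back to the colour of `1`, and
`(1,2,3,3,11; 11)` is then monochromatic.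
-/

open Finset

lemma Fin.two_eq_of_ne_of_ne {a b c : Fin 2} (ha : a ≠ c) (hb : b ≠ c) : a = b := by
  omega

def HasMonoSolution {α : Type*} (N : ℕ) (Δ : ℕ → α) : Prop :=
  ∃ (x : Fin 5 → ℕ) (x0 : ℕ), (∀ i, x i ∈ Icc 1 N) ∧ x0 ∈ Icc 1 N ∧
    (∀ i, Δ (x i) = Δ x0) ∧ (∑ i, x i) + 2 = 2 * x0

theorem HasMonoSolution.of_colors {α : Type*} {N : ℕ} {Δ : ℕ → α} (a b c d e x0 : ℕ)
    (hrange : ∀ y ∈ [a, b, c, d, e, x0], y ∈ Icc 1 N) (hsum : a + b + c + d + e + 2 = 2 * x0)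
    (hcol : ∀ y ∈ [a, b, c, d, e], Δ y = Δ x0) : HasMonoSolution N Δ := by
  refine ⟨![a, b, c, d, e], x0, ?_, hrange x0 (by simp), ?_, ?_⟩
  · intro i; fin_cases i <;> exact hrange _ (by simp)
  · intro i; fin_cases i <;> exact hcol _ (by simp)
  · simp [Fin.sum_univ_five, ← hsum]

theorem stmt10 (Δ : ℕ → Fin 2) :
    ∃ (x : Fin 5 → ℕ) (x0 : ℕ),
      (∀ i, x i ∈ Finset.Icc 1 11) ∧ x0 ∈ Finset.Icc 1 11 ∧
      (∀ i, Δ (x i) = Δ x0) ∧ (∑ i, x i) + 2 = 2 * x0 := by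
  by_contra hno
  have avoid (a b c d e x0 : ℕ) (hrange : ∀ y ∈ [a, b, c, d, e, x0], y ∈ Icc 1 11)
      (hsum : a + b + c + d + e + 2 = 2 * x0) : ¬ ∀ y ∈ [a, b, c, d, e], Δ y = Δ x0 :=
    fun hcol => hno (HasMonoSolution.of_colors a b c d e x0 hrange hsum hcol)
  have h16 : Δ 1 ≠ Δ 6 := fun h => avoid 1 1 1 1 6 6 (by decide) rfl (by simp [h])
  have h26 : Δ 2 ≠ Δ 6 := fun h => avoid 2 2 2 2 2 6 (by decide) rfl (by simp [h])
  have h12 : Δ 1 = Δ 2 := Fin.two_eq_of_ne_of_ne h16 h26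
  have h14 : Δ 1 ≠ Δ 4 := fun h => avoid 1 1 1 1 2 4 (by decide) rfl (by simp [h, ← h12])
  have h19 : Δ 1 ≠ Δ 9 := fun h => avoid 1 2 2 2 9 9 (by decide) rfl (by simp [h, ← h12])
  have h49 : Δ 4 = Δ 9 := Fin.two_eq_of_ne_of_ne h14.symm h19.symm
  have h411 : Δ 4 ≠ Δ 11 := fun h => avoid 4 4 4 4 4 11 (by decide) rfl (by simp [h])
  have h34 : Δ 3 ≠ Δ 4 := fun h => avoid 3 3 3 3 4 9 (by decide) rfl (by simp [h, h49])
  have h111 : Δ 1 = Δ 11 := Fin.two_eq_of_ne_of_ne h14 h411.symm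
  have h13 : Δ 1 = Δ 3 := Fin.two_eq_of_ne_of_ne h14 h34
  exact avoid 1 2 3 3 11 11 (by decide) rfl (by simp [← h111, ← h12, ← h13])
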